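/- Let n ≥ 2 and let s, t₁, t₂ ∈ ℝⁿ be nonzero vectors such that t₂ = ε·t₁ + μ·s for some ε ∈ {1,−1} and μ ∈ ℝ, and suppose t₁ is not a scalar multiple of s. Then for every ε' ∈ (0,1) there exists λ > 0 such that (1−ε')·t₁t₁ᵀ ≼ t₂t₂ᵀ + λ·s sᵀ, i.e., the matrix t₂t₂ᵀ + λ·s sᵀ − (1−ε')·t₁t₁ᵀ is positive semidefinite. -/

import Mathlib

/-!
Writing `t₂ = ε (t₁ + v)` with `v = ε μ s`, the rank-one matrices satisfy the matrix form of
Peter–Paul's inequality `2⟨t₁,x⟩⟨v,x⟩ ≥ -δ⟨t₁,x⟩² - δ⁻¹⟨v,x⟩²`: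
`(t₁ + v)(t₁ + v)ᵀ + (δ⁻¹ - 1) vvᵀ - (1 - δ) t₁t₁ᵀ = δ⁻¹ (δ t₁ + v)(δ t₁ + v)ᵀ ≽ 0`.
Since `vvᵀ = μ² ssᵀ`, any `λ ≥ μ² (δ⁻¹ - 1)` works, e.g. `λ = μ² δ⁻¹ + 1`.
-/

open Matrix

variable {ι : Type*}

theorem Matrix.posSemidef_vecMulVec_self [Fintype ι] (a : ι → ℝ) : (vecMulVec a a).PosSemidef := by
  simpa using posSemidef_vecMulVec_self_star a

theorem Matrix.vecMulVec_add_add_smul_sub_smul (u v : ι → ℝ) {δ : ℝ} (hδ : δ ≠ 0) :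
    vecMulVec (u + v) (u + v) + (δ⁻¹ - 1) • vecMulVec v v - (1 - δ) • vecMulVec u u =
      δ⁻¹ • vecMulVec (δ • u + v) (δ • u + v) := by
  ext i j
  simp only [sub_apply, add_apply, smul_apply, vecMulVec_apply, Pi.add_apply, Pi.smul_apply,
    smul_eq_mul]
  field_simp
  ring

theorem Matrix.posSemidef_vecMulVec_add_add_smul_sub_smul [Fintype ι] (u v : ι → ℝ) {δ : ℝ}
    (hδ : 0 < δ) :
    (vecMulVec (u + v) (u + v) + (δ⁻¹ - 1) • vecMulVec v v -
      (1 - δ) • vecMulVec u u).PosSemidef := by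
  rw [vecMulVec_add_add_smul_sub_smul u v hδ.ne']
  exact (posSemidef_vecMulVec_self _).smul (inv_nonneg.2 hδ.le)

theorem loewner_segment_inclusion {n : ℕ}
    (s t₁ t₂ : Fin n → ℝ)
    (ε μ : ℝ) (hε : ε = 1 ∨ ε = -1) (ht : t₂ = ε • t₁ + μ • s) :
    ∀ ε' : ℝ, 0 < ε' → ε' < 1 → ∃ lam : ℝ, 0 < lam ∧
      (Matrix.vecMulVec t₂ t₂ + lam • Matrix.vecMulVec s s -
        (1 - ε') • Matrix.vecMulVec t₁ t₁).PosSemidef := by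
  intro δ hδ _
  set v := (ε * μ) • s
  have hsplit : vecMulVec t₂ t₂ + (μ ^ 2 * δ⁻¹ + 1) • vecMulVec s s - (1 - δ) • vecMulVec t₁ t₁ =
      (vecMulVec (t₁ + v) (t₁ + v) + (δ⁻¹ - 1) • vecMulVec v v - (1 - δ) • vecMulVec t₁ t₁) +
        (μ ^ 2 + 1) • vecMulVec s s := by
    subst ht
    ext i j
    rcases hε with rfl | rfl <;>
      simp only [v, Matrix.sub_apply, Matrix.add_apply, Matrix.smul_apply, vecMulVec_apply,
        Pi.add_apply, Pi.smul_apply, smul_eq_mul] <;> ring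
  refine ⟨μ ^ 2 * δ⁻¹ + 1, by positivity, ?_⟩
  rw [hsplit]
  exact (posSemidef_vecMulVec_add_add_smul_sub_smul t₁ v hδ).add
    ((posSemidef_vecMulVec_self s).smul (by positivity))
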